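/- arXiv:1109.1533 — 6 statements merged into one kernel-verified Lean document; each statement's English description precedes it below -/
import Mathlib

section
/- Let X_1,...,X_n be random variables with range [0,b] such that |E[X_t | X_1,...,X_{t-1}] - μ| ≤ C for all t, where 0 < C < μ. Let S_n = X_1 + ... + X_n. Then for all a ≥ 0, P(S_n ≥ n(μ+C) + a) ≤ exp(-2(a(μ-C)/(b(μ+C)))²/n). -/
/-!
Only the upper bound `E[X_t | X_1, …, X_{t-1}] ≤ μ + C =: ν` matters. Conditionally on the past,
the chord of `exp` over `[0, b]` together with Hoeffding's lemma gives
`E[exp (l X_t) | past] ≤ exp (l ν + l² b² / 8)`, so peeling off the last variable one at a time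
bounds `E[exp (l S_n)]` by the `n`-th power of that. The Chernoff bound with `l = 4a / (n b²)`
then gives `P(S_n ≥ n ν + a) ≤ exp (-2 a² / (n b²))`, which is stronger than the claim because
`0 < (μ - C) / (μ + C) < 1`.
-/

open MeasureTheory Real

section

open ProbabilityTheory

-- Hoeffding's lemma for a Bernoulli(p) variable.
lemma one_sub_add_mul_exp_le {p : ℝ} (hp0 : 0 ≤ p) (hp1 : p ≤ 1) (u : ℝ) :
    1 - p + p * exp u ≤ exp (p * u + u ^ 2 / 8) := by
  set q : unitInterval := ⟨p, hp0, hp1⟩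
  have hsupp : ∀ᵐ z ∂Ber((1:ℝ), 0, q), z ∈ Set.Icc (0:ℝ) 1 := by
    rw [ae_iff]
    exact bernoulliMeasure_apply_of_notMem_of_notMem q measurableSet_Icc.compl (by simp) (by simp)
  have hmean : ∫ z, z ∂Ber((1:ℝ), 0, q) = p := by simp [integral_bernoulliMeasure, q]
  have hoeffding := (hasSubgaussianMGF_of_mem_Icc (X := id) measurable_id.aemeasurable
    hsupp).mgf_le u
  have hc : ((‖(1:ℝ) - 0‖₊ / 2) ^ 2 : NNReal) = (1 / 4 : ℝ) := by norm_num
  simp only [mgf, id, hmean, integral_bernoulliMeasure, smul_eq_mul, hc] at hoeffding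
  have h1 : exp (p * u) * exp (u * (1 - p)) = exp u := by rw [← exp_add]; ring_nf
  have h0 : exp (p * u) * exp (u * (0 - p)) = 1 := by rw [← exp_add]; ring_nf; simp
  calc 1 - p + p * exp u
      = exp (p * u) * (p * exp (u * (1 - p)) + (1 - p) * exp (u * (0 - p))) := by
        linear_combination (-p) * h1 - (1 - p) * h0
    _ ≤ exp (p * u) * exp (1 / 4 * u ^ 2 / 2) := by gcongr
    _ = exp (p * u + u ^ 2 / 8) := by rw [← exp_add]; ring_nf

lemma exp_mul_le_of_mem_Icc {b l x : ℝ} (hb : 0 < b) (hx : x ∈ Set.Icc 0 b) :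
    exp (l * x) ≤ 1 + x / b * (exp (l * b) - 1) := by
  obtain ⟨hx0, hxb⟩ := hx
  have key := convexOn_exp.2 (Set.mem_univ 0) (Set.mem_univ (l * b))
    (sub_nonneg.2 (div_le_one_of_le₀ hxb hb.le)) (div_nonneg hx0 hb.le) (sub_add_cancel 1 _)
  have hlx : x / b * (l * b) = l * x := by field_simp
  simp only [smul_eq_mul, mul_zero, zero_add, exp_zero, mul_one, hlx] at key
  linarith

variable {Ω : Type*} {m mΩ : MeasurableSpace Ω} {μ : Measure Ω}

lemma condExp_exp_mul_le [IsFiniteMeasure μ] (hm : m ≤ mΩ) {Y : Ω → ℝ} {b ν l : ℝ}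
    (hb : 0 < b) (hl : 0 ≤ l) (hY : AEMeasurable Y μ) (hrange : ∀ᵐ ω ∂μ, Y ω ∈ Set.Icc 0 b)
    (hmean : μ[Y | m] ≤ᵐ[μ] fun _ => ν) :
    μ[fun ω => exp (l * Y ω) | m] ≤ᵐ[μ] fun _ => exp (l * ν + l ^ 2 * b ^ 2 / 8) := by
  set c := (exp (l * b) - 1) / b
  have hYint : Integrable Y μ := Integrable.of_mem_Icc 0 b hY hrange
  have hchord : μ[fun ω => exp (l * Y ω) | m] ≤ᵐ[μ] μ[fun ω => 1 + c * Y ω | m] := by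
    refine condExp_mono (integrable_exp_mul_of_mem_Icc hY hrange)
      ((integrable_const 1).add (hYint.const_mul c)) ?_
    filter_upwards [hrange] with ω hω
    calc exp (l * Y ω) ≤ 1 + Y ω / b * (exp (l * b) - 1) := exp_mul_le_of_mem_Icc hb hω
      _ = 1 + c * Y ω := by ring
  have hlinear : μ[fun ω => 1 + c * Y ω | m] =ᵐ[μ] fun ω => 1 + c * μ[Y | m] ω := by
    filter_upwards [condExp_add (integrable_const 1) (hYint.smul c) m, condExp_smul c Y m]
      with ω hsum hsmul
    refine hsum.trans ?_
    simp [hsmul, condExp_const hm]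
  have hmean_nonneg : 0 ≤ᵐ[μ] μ[Y | m] :=
    condExp_nonneg (by filter_upwards [hrange] with ω hω using hω.1)
  have hmean_le_b : μ[Y | m] ≤ᵐ[μ] fun _ => b := by
    simpa [condExp_const hm] using condExp_mono (m := m) hYint (integrable_const b)
      (by filter_upwards [hrange] with ω hω using hω.2)
  filter_upwards [hchord, hlinear, hmean, hmean_nonneg, hmean_le_b]
    with ω hchord hlinear hmean hM0 hMb
  set M := μ[Y | m] ω
  have hscalar :=
    one_sub_add_mul_exp_le (div_nonneg hM0 hb.le) (div_le_one_of_le₀ hMb hb.le) (l * b)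
  calc μ[fun ω => exp (l * Y ω) | m] ω ≤ 1 + c * M := hlinear ▸ hchord
    _ = 1 - M / b + M / b * exp (l * b) := by simp only [c]; field_simp; ring
    _ ≤ exp (M / b * (l * b) + (l * b) ^ 2 / 8) := hscalar
    _ = exp (l * M + l ^ 2 * b ^ 2 / 8) := by congr 1; field_simp
    _ ≤ exp (l * ν + l ^ 2 * b ^ 2 / 8) := by gcongr

lemma integral_mul_le_of_condExp_le [IsFiniteMeasure μ] (hm : m ≤ mΩ) {F g : Ω → ℝ} {B : ℝ}
    (hF : StronglyMeasurable[m] F) (hF0 : 0 ≤ᵐ[μ] F) (hFint : Integrable F μ)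
    (hg : Integrable g μ) (hFg : Integrable (F * g) μ) (hgB : μ[g | m] ≤ᵐ[μ] fun _ => B) :
    ∫ ω, F ω * g ω ∂μ ≤ B * ∫ ω, F ω ∂μ := by
  calc ∫ ω, F ω * g ω ∂μ = ∫ ω, μ[F * g | m] ω ∂μ := (integral_condExp hm).symm
    _ = ∫ ω, F ω * μ[g | m] ω ∂μ :=
        integral_congr_ae (condExp_mul_of_stronglyMeasurable_left hF hFg hg)
    _ ≤ ∫ ω, F ω * B ∂μ := by
        refine integral_mono_ae (integrable_condExp.congr
          (condExp_mul_of_stronglyMeasurable_left hF hFg hg)) (hFint.mul_const B) ?_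
        filter_upwards [hF0, hgB] with ω hF0 hgB
        exact mul_le_mul_of_nonneg_left hgB hF0
    _ = B * ∫ ω, F ω ∂μ := by rw [integral_mul_const, mul_comm]

lemma integrable_exp_mul_sum [IsFiniteMeasure μ] {n : ℕ} {X : Fin n → Ω → ℝ} {b : ℝ}
    (hX : ∀ t, Measurable (X t)) (hrange : ∀ t ω, X t ω ∈ Set.Icc 0 b) (l : ℝ) :
    Integrable (fun ω => exp (l * ∑ t, X t ω)) μ := by
  refine integrable_exp_mul_of_mem_Icc (a := 0) (b := n * b)
    (Finset.measurable_sum _ fun t _ => hX t).aemeasurable (ae_of_all _ fun ω => ⟨?_, ?_⟩)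
  · exact Finset.sum_nonneg fun t _ => (hrange t ω).1
  · simpa using Finset.sum_le_sum fun t (_ : t ∈ Finset.univ) => (hrange t ω).2

theorem integral_exp_mul_sum_le_of_condExp_le [IsProbabilityMeasure μ] {n : ℕ}
    (X : Fin n → Ω → ℝ) (ℱ : Fin n → MeasurableSpace Ω) {b ν l : ℝ} (hb : 0 < b) (hl : 0 ≤ l)
    (hℱ : ∀ t, ℱ t ≤ mΩ) (hadapted : ∀ s t, s < t → Measurable[ℱ t] (X s))
    (hX : ∀ t, Measurable (X t)) (hrange : ∀ t ω, X t ω ∈ Set.Icc 0 b)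
    (hmean : ∀ t, μ[X t | ℱ t] ≤ᵐ[μ] fun _ => ν) :
    ∫ ω, exp (l * ∑ t, X t ω) ∂μ ≤ exp (l * ν + l ^ 2 * b ^ 2 / 8) ^ n := by
  induction n with
  | zero => simp
  | succ n ih =>
    set F : Ω → ℝ := fun ω => exp (l * ∑ t : Fin n, X t.castSucc ω)
    set g : Ω → ℝ := fun ω => exp (l * X (Fin.last n) ω)
    have hsplit : (fun ω => exp (l * ∑ t, X t ω)) = F * g := by
      ext ω; simp [F, g, Fin.sum_univ_castSucc, mul_add, exp_add]
    have hF : StronglyMeasurable[ℱ (Fin.last n)] F :=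
      (measurable_exp.comp ((Finset.measurable_sum _ fun t _ =>
        hadapted _ _ (Fin.castSucc_lt_last t)).const_mul l)).stronglyMeasurable
    calc ∫ ω, exp (l * ∑ t, X t ω) ∂μ = ∫ ω, F ω * g ω ∂μ := by rw [hsplit]; rfl
      _ ≤ exp (l * ν + l ^ 2 * b ^ 2 / 8) * ∫ ω, F ω ∂μ :=
        integral_mul_le_of_condExp_le (hℱ _) hF (ae_of_all _ fun ω => (exp_pos _).le)
          (integrable_exp_mul_sum (fun t => hX _) (fun t => hrange _) l)
          (integrable_exp_mul_of_mem_Icc (hX _).aemeasurable (ae_of_all _ (hrange _)))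
          (hsplit ▸ integrable_exp_mul_sum hX hrange l)
          (condExp_exp_mul_le (hℱ _) hb hl (hX _).aemeasurable (ae_of_all _ (hrange _))
            (hmean _))
      _ ≤ exp (l * ν + l ^ 2 * b ^ 2 / 8) * exp (l * ν + l ^ 2 * b ^ 2 / 8) ^ n := by
        gcongr
        exact ih _ (fun t => ℱ t.castSucc) (fun t => hℱ _)
          (fun s t hst => hadapted _ _ (Fin.castSucc_lt_castSucc_iff.2 hst))
          (fun t => hX _) (fun t => hrange _) (fun t => hmean _)
      _ = exp (l * ν + l ^ 2 * b ^ 2 / 8) ^ (n + 1) := (pow_succ' _ _).symm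

theorem measureReal_sum_ge_le_of_condExp_le [IsProbabilityMeasure μ] {n : ℕ}
    (X : Fin n → Ω → ℝ) (ℱ : Fin n → MeasurableSpace Ω) {b ν a : ℝ} (hb : 0 < b) (ha : 0 ≤ a)
    (hℱ : ∀ t, ℱ t ≤ mΩ) (hadapted : ∀ s t, s < t → Measurable[ℱ t] (X s))
    (hX : ∀ t, Measurable (X t)) (hrange : ∀ t ω, X t ω ∈ Set.Icc 0 b)
    (hmean : ∀ t, μ[X t | ℱ t] ≤ᵐ[μ] fun _ => ν) :
    μ.real {ω | n * ν + a ≤ ∑ t, X t ω} ≤ exp (-2 * a ^ 2 / (n * b ^ 2)) := by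
  set l := 4 * a / (n * b ^ 2)
  have hl : 0 ≤ l := by positivity
  calc μ.real {ω | n * ν + a ≤ ∑ t, X t ω}
      ≤ exp (-l * (n * ν + a)) * mgf (fun ω => ∑ t, X t ω) μ l :=
        measure_ge_le_exp_mul_mgf _ hl (integrable_exp_mul_sum hX hrange l)
    _ ≤ exp (-l * (n * ν + a)) * exp (l * ν + l ^ 2 * b ^ 2 / 8) ^ n := by
        gcongr
        exact integral_exp_mul_sum_le_of_condExp_le X ℱ hb hl hℱ hadapted hX hrange hmean
    _ = exp (-2 * a ^ 2 / (n * b ^ 2)) := by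
        rw [← exp_nat_mul, ← exp_add]
        congr 1
        rcases n.eq_zero_or_pos with rfl | hn
        · simp [l]
        · simp only [l]; field_simp; ring

end

/-- Generalized Chernoff-Hoeffding bound (upper tail) for random variables
whose conditional means may drift within `C` of `μ`. -/
theorem generalized_chernoff_hoeffding_upper
    {Ω : Type*} [MeasurableSpace Ω] (ℙ : Measure Ω) [IsProbabilityMeasure ℙ]
    (n : ℕ) (X : Fin n → Ω → ℝ) (b μ C : ℝ)
    (hb : 0 < b) (hC : 0 < C) (hCμ : C < μ)
    (hmeas : ∀ t, Measurable (X t))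
    (hrange : ∀ t ω, X t ω ∈ Set.Icc (0 : ℝ) b)
    (hcond : ∀ t : Fin n, ∀ᵐ ω ∂ℙ,
      |(ℙ[X t | ⨆ i : {i : Fin n // (i : ℕ) < (t : ℕ)},
          MeasurableSpace.comap (X i.1) inferInstance]) ω - μ| ≤ C)
    (a : ℝ) (ha : 0 ≤ a) :
    (ℙ {ω | (n : ℝ) * (μ + C) + a ≤ ∑ t, X t ω}).toReal ≤
      Real.exp (-2 * (a * (μ - C) / (b * (μ + C)))^2 / n) := by
  have hratio : (a * (μ - C) / (b * (μ + C))) ^ 2 ≤ (a / b) ^ 2 := by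
    rw [mul_div_mul_comm]
    gcongr
    · exact mul_nonneg (by positivity) (div_nonneg (by linarith) (by linarith))
    · exact mul_le_of_le_one_right (by positivity) ((div_le_one (by linarith)).2 (by linarith))
  calc (ℙ {ω | (n : ℝ) * (μ + C) + a ≤ ∑ t, X t ω}).toReal
      ≤ exp (-2 * a ^ 2 / (n * b ^ 2)) :=
        measureReal_sum_ge_le_of_condExp_le X
          (fun t => ⨆ i : {i : Fin n // (i : ℕ) < (t : ℕ)},
            MeasurableSpace.comap (X i.1) inferInstance) hb ha
          (fun t => iSup_le fun i => (hmeas i.1).comap_le)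
          (fun s t hst => measurable_iff_comap_le.2 (le_iSup_of_le ⟨s, hst⟩ le_rfl))
          hmeas hrange
          (fun t => by filter_upwards [hcond t] with ω hω using by linarith [(abs_le.1 hω).2])
    _ ≤ exp (-2 * (a * (μ - C) / (b * (μ + C))) ^ 2 / n) := by
        rw [exp_le_exp, show -2 * a ^ 2 / (n * b ^ 2) = -2 * (a / b) ^ 2 / n by ring]
        exact div_le_div_of_nonneg_right (by linarith) n.cast_nonneg
end

section
/- For every integer α ≥ 1 and real L > 0, and every real t ≥ e^{4α/L}, it holds that 1 + √(L ln t / (4α+1)) − √(L ln t / (α−1)) < 0 whenever α ≥ 2. Equivalently, √(L ln t/(α−1)) > 1 + √(L ln t/(4α+1)) for t ≥ e^{4α/L} and α ≥ 2. -/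
/-!
Put `X = L log t`; the hypothesis on `t` says `X ≥ 4α`. Since `α - 1 < 4α + 1`, the quantity
`√(X/(4α+1)) - √(X/(α-1))` is antitone in `X`, so it suffices to treat `X = 4α`. There
`√(4α/(α-1)) > 2` and `√(4α/(4α+1)) < 1`, leaving a margin of more than `1`.
-/

open Real

lemma antitone_sqrt_div_sub_sqrt_div {a b : ℝ} (hb : 0 < b) (hba : b ≤ a) :
    Antitone fun x : ℝ => √(x / a) - √(x / b) := by
  intro x y hxy
  have hcoeff : 1 / √a - 1 / √b ≤ 0 :=
    sub_nonpos.mpr <| one_div_le_one_div_of_le (sqrt_pos.mpr hb) (sqrt_le_sqrt hba)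
  have hmul := mul_le_mul_of_nonpos_right (sqrt_le_sqrt hxy) hcoeff
  simp only [sqrt_div' _ (hb.le.trans hba), sqrt_div' _ hb.le, div_eq_mul_one_div (√_)]
  linarith

lemma le_mul_log_of_exp_div_le {c L t : ℝ} (hL : 0 < L) (ht : exp (c / L) ≤ t) :
    c ≤ L * log t := by
  have hc : c / L ≤ log t := (le_log_iff_exp_le (exp_pos _ |>.trans_le ht)).mpr ht
  rwa [div_le_iff₀' hL] at hc

lemma two_lt_sqrt_four_mul_div_sub_one {a : ℝ} (ha : 1 < a) : 2 < √(4 * a / (a - 1)) := by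
  rw [lt_sqrt zero_le_two, lt_div_iff₀ (sub_pos.mpr ha)]
  linarith

lemma sqrt_div_add_one_lt_one {x : ℝ} (hx : 0 ≤ x) : √(x / (x + 1)) < 1 := by
  rw [sqrt_lt' one_pos, one_pow, div_lt_one (by positivity)]
  linarith

/-- The under-played arm's UCB index exceeds the over-played arm's index. -/
theorem ucb_contradiction (α : ℕ) (L : ℝ) (hα : 2 ≤ α) (hL : 0 < L)
    (t : ℝ) (ht : t ≥ Real.exp (4 * α / L)) :
    1 + Real.sqrt (L * Real.log t / (4 * α + 1)) -
      Real.sqrt (L * Real.log t / ((α : ℝ) - 1)) < 0 := by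
  have hα' : (1 : ℝ) < α := by exact_mod_cast hα
  have hX : 4 * (α : ℝ) ≤ L * log t := le_mul_log_of_exp_div_le hL ht
  have hmono := antitone_sqrt_div_sub_sqrt_div (a := 4 * (α : ℝ) + 1) (sub_pos.mpr hα')
    (by linarith) hX
  have h₁ := two_lt_sqrt_four_mul_div_sub_one hα'
  have h₂ := sqrt_div_add_one_lt_one (by positivity : (0 : ℝ) ≤ 4 * α)
  simp only at hmono
  linarith
end

section
/- Let U_1 > U_2, C_1, C_2 ≥ 0, K ≥ 1 with U_1 − U_2 − (C_1+C_2)/K > 0 and U_2 − C_2/K > 0. Set c_{t,s} = √(L ln t / s) with L > 0 and λ(n) = ⌈L(1 + (U_2+C_2/K)/(U_2−C_2/K))² ln n / (U_1 − U_2 − (C_1+C_2)/K)²⌉. Then for all integers s ≥ λ(n) and all t ≤ n with t ≥ 1, the inequality U_1 − C_1/K < U_2 + C_2/K + (1 + (U_2+C_2/K)/(U_2−C_2/K))·c_{t,s} is false. -/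
/-!
With `A = 1 + (U₂ + C₂/K)/(U₂ - C₂/K)` and `Δ = U₁ - U₂ - (C₁ + C₂)/K`, the choice of `λ(n)` gives
`s Δ² ≥ L A² ln n ≥ L A² ln t`, i.e. `A c_{t,s} ≤ Δ`; since `U₂ + C₂/K + Δ = U₁ - C₁/K`, this is
the negation of the overlap condition.
-/

theorem mul_sqrt_le_of_sq_mul_le {a x b : ℝ} (hb : 0 ≤ b) (h : a ^ 2 * x ≤ b ^ 2) :
    a * √x ≤ b := by
  rcases le_or_gt 0 x with hx | hx
  · exact (le_abs_self _).trans (abs_le_of_sq_le_sq (by rwa [mul_pow, Real.sq_sqrt hx]) hb)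
  · rw [Real.sqrt_eq_zero_of_nonpos hx.le, mul_zero]
    exact hb

theorem div_le_of_ceil_div_le {y d s : ℝ} (hd : 0 < d) (hs0 : 0 ≤ s) (hs : (⌈y / d⌉ : ℝ) ≤ s) :
    y / s ≤ d := by
  rcases hs0.eq_or_lt with rfl | hs0
  · rw [div_zero]
    exact hd.le
  · rw [div_le_iff₀ hs0, ← div_le_iff₀' hd]
    exact (Int.le_ceil _).trans hs

theorem overlap_condition_fails_general (U1 U2 C1 C2 K L : ℝ)
    (hD : U1 - U2 - (C1 + C2) / K > 0) (hL : 0 < L)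
    (n : ℕ) :
    ∀ s : ℕ, (s : ℝ) ≥ ((⌈L * (1 + (U2 + C2 / K) / (U2 - C2 / K)) ^ 2 *
        Real.log n / (U1 - U2 - (C1 + C2) / K) ^ 2⌉ : ℤ) : ℝ) →
      ∀ t : ℕ, 1 ≤ t → t ≤ n →
        ¬ (U1 - C1 / K < U2 + C2 / K +
            (1 + (U2 + C2 / K) / (U2 - C2 / K)) *
              Real.sqrt (L * Real.log t / s)) := by
  intro s hs t ht htn
  set A : ℝ := 1 + (U2 + C2 / K) / (U2 - C2 / K)
  set Δ : ℝ := U1 - U2 - (C1 + C2) / K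
  have hlog : Real.log t ≤ Real.log n :=
    Real.log_le_log (by exact_mod_cast ht) (by exact_mod_cast htn)
  have hradius : A ^ 2 * (L * Real.log t / s) ≤ Δ ^ 2 :=
    calc A ^ 2 * (L * Real.log t / s) = L * A ^ 2 * Real.log t / s := by ring
      _ ≤ L * A ^ 2 * Real.log n / s := by gcongr
      _ ≤ Δ ^ 2 := div_le_of_ceil_div_le (by positivity) s.cast_nonneg hs
  have hwidth := mul_sqrt_le_of_sq_mul_le hD.le hradius
  rw [not_lt]
  linarith [add_div C1 C2 K]

/-- Once the suboptimal policy is sampled `λ(n)` times, the overlap condition fails. -/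
theorem overlap_condition_fails (U1 U2 C1 C2 K L : ℝ)
    (hU : U1 > U2) (hC1 : 0 ≤ C1) (hC2 : 0 ≤ C2) (hK : 1 ≤ K)
    (hD : U1 - U2 - (C1 + C2) / K > 0) (hU2K : U2 - C2 / K > 0) (hL : 0 < L)
    (n : ℕ) (hn : 1 ≤ n) :
    ∀ s : ℕ, (s : ℝ) ≥ ((⌈L * (1 + (U2 + C2 / K) / (U2 - C2 / K)) ^ 2 *
        Real.log n / (U1 - U2 - (C1 + C2) / K) ^ 2⌉ : ℤ) : ℝ) →
      ∀ t : ℕ, 1 ≤ t → t ≤ n →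
        ¬ (U1 - C1 / K < U2 + C2 / K +
            (1 + (U2 + C2 / K) / (U2 - C2 / K)) *
              Real.sqrt (L * Real.log t / s)) :=
  overlap_condition_fails_general U1 U2 C1 C2 K L hD hL n
end

section
/- For the N=2 channel problem with transition probabilities 0 < p_{01}, p_{11} < 1, the steady-state average reward of the stay-on-1/switch-on-0 policy π_1 equals U_1(P) = p_{01}²/(1−p_{11}+p_{01})² + (1−p_{01}+p_{11})·p_{01}(1−p_{11})/(1−p_{11}+p_{01})². -/
/-!
Under `π₁` the next sensed state and the next state of the other channel are independent, and
after a `0` the channels swap roles, so from `(0, 1)` and `(1, 0)` alike the sensed channel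
evolves from state `1` and the other from state `0`. The stationary law is therefore pinned down
by its masses `a` at `(0, 0)` and `d` at `(1, 1)`, through the balance equations at these two
states: a `2 × 2` linear system of determinant `(1 - p₁₁ + p₀₁)² (1 - p₀₁ + p₁₁)`. The reward is
`p₁₁ - (p₁₁ - p₀₁) a`, and Cramer's rule gives `a`.
-/

/-- The kernel of `π₁` on (sensed state, other state). -/
def stayOrSwitchKernel (p : Fin 2 → Fin 2 → ℝ) (i j : Fin 2 × Fin 2) : ℝ :=
  if i.1 = 1 then p i.1 j.1 * p i.2 j.2 else p i.1 j.2 * p i.2 j.1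

theorem sum_mul_stayOrSwitchKernel (p : Fin 2 → Fin 2 → ℝ) (σ : Fin 2 × Fin 2 → ℝ)
    (s o : Fin 2) :
    ∑ i, σ i * stayOrSwitchKernel p i (s, o) =
      σ (0, 0) * (p 0 s * p 0 o) + (σ (0, 1) + σ (1, 0)) * (p 1 s * p 0 o) +
        σ (1, 1) * (p 1 s * p 1 o) := by
  simp only [stayOrSwitchKernel, Fintype.sum_prod_type, Fin.sum_univ_two, Fin.isValue,
    zero_ne_one, if_false, if_true]
  ring

section Stationary

variable {x y : ℝ} {σ : Fin 2 × Fin 2 → ℝ}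

theorem sensed_one_eq (hsum : ∑ i, σ i = 1)
    (hstat : ∀ j, σ j = ∑ i, σ i * stayOrSwitchKernel ![![1 - x, x], ![1 - y, y]] i j) :
    σ (1, 0) + σ (1, 1) = y - (y - x) * σ (0, 0) := by
  rw [Fintype.sum_prod_type, Fin.sum_univ_two, Fin.sum_univ_two, Fin.sum_univ_two] at hsum
  rw [hstat (1, 0), hstat (1, 1), sum_mul_stayOrSwitchKernel, sum_mul_stayOrSwitchKernel]
  simp only [Fin.isValue, Matrix.cons_val_zero, Matrix.cons_val_one]
  linear_combination y * hsum

theorem stationary_zero_zero (hq : 1 - y + x ≠ 0) (hw : 1 - x + y ≠ 0) (hsum : ∑ i, σ i = 1)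
    (hstat : ∀ j, σ j = ∑ i, σ i * stayOrSwitchKernel ![![1 - x, x], ![1 - y, y]] i j) :
    σ (0, 0) = (1 - y) * (1 - x - y * (y - x)) / ((1 - y + x) ^ 2 * (1 - x + y)) := by
  rw [Fintype.sum_prod_type, Fin.sum_univ_two, Fin.sum_univ_two, Fin.sum_univ_two] at hsum
  have balance_zero := hstat (0, 0)
  have balance_one := hstat (1, 1)
  rw [sum_mul_stayOrSwitchKernel] at balance_zero balance_one
  simp only [Fin.isValue, Matrix.cons_val_zero, Matrix.cons_val_one] at balance_zero balance_one
  rw [eq_div_iff (mul_ne_zero (pow_ne_zero 2 hq) hw)]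
  linear_combination (1 - y * (y - x)) * balance_zero - (1 - y) * (y - x) * balance_one +
    (1 - y) * (1 - x - y * (y - x)) * hsum

end Stationary

theorem steady_state_reward_pi1_general (p01 p11 : ℝ)
    (h01 : 0 < p01) (h01' : p01 < 1) (h11 : 0 < p11) (h11' : p11 < 1)
    (p : Fin 2 → Fin 2 → ℝ)
    (hp : p = ![![1 - p01, p01], ![1 - p11, p11]])
    -- transition kernel of the joint chain under policy π₁ :
    -- stay on the sensed channel after a 1, switch after a 0
    (Q : (Fin 2 × Fin 2) → (Fin 2 × Fin 2) → ℝ)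
    (hQ : ∀ i j : Fin 2 × Fin 2,
      Q i j = if i.1 = 1 then p i.1 j.1 * p i.2 j.2 else p i.1 j.2 * p i.2 j.1)
    (σ : (Fin 2 × Fin 2) → ℝ)
    (hσsum : ∑ i, σ i = 1)
    (hσstat : ∀ j, σ j = ∑ i, σ i * Q i j) :
    σ (1, 0) + σ (1, 1) =
      p01 ^ 2 / (1 - p11 + p01) ^ 2 +
        (1 - p01 + p11) * p01 * (1 - p11) / (1 - p11 + p01) ^ 2 := by
  have hkernel : Q = stayOrSwitchKernel ![![1 - p01, p01], ![1 - p11, p11]] := by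
    subst hp
    exact funext fun i => funext (hQ i)
  subst hkernel
  have hq : 1 - p11 + p01 ≠ 0 := by linarith
  have hw : 1 - p01 + p11 ≠ 0 := by linarith
  rw [sensed_one_eq hσsum hσstat, stationary_zero_zero hq hw hσsum hσstat]
  field_simp
  ring

/-- Steady-state average reward of the stay-on-1/switch-on-0 policy `π₁`
for two identical two-state Markov channels: the stationary probability,
under the induced 4-state joint chain on (sensed state, other state),
of sensing a 1 equals the stated closed form. -/
theorem steady_state_reward_pi1 (p01 p11 : ℝ)
    (h01 : 0 < p01) (h01' : p01 < 1) (h11 : 0 < p11) (h11' : p11 < 1)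
    (p : Fin 2 → Fin 2 → ℝ)
    (hp : p = ![![1 - p01, p01], ![1 - p11, p11]])
    -- transition kernel of the joint chain under policy π₁ :
    -- stay on the sensed channel after a 1, switch after a 0
    (Q : (Fin 2 × Fin 2) → (Fin 2 × Fin 2) → ℝ)
    (hQ : ∀ i j : Fin 2 × Fin 2,
      Q i j = if i.1 = 1 then p i.1 j.1 * p i.2 j.2 else p i.1 j.2 * p i.2 j.1)
    (σ : (Fin 2 × Fin 2) → ℝ)
    (hσpos : ∀ i, 0 ≤ σ i) (hσsum : ∑ i, σ i = 1)
    (hσstat : ∀ j, σ j = ∑ i, σ i * Q i j) :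
    σ (1, 0) + σ (1, 1) =
      p01 ^ 2 / (1 - p11 + p01) ^ 2 +
        (1 - p01 + p11) * p01 * (1 - p11) / (1 - p11 + p01) ^ 2 :=
  steady_state_reward_pi1_general p01 p11 h01 h01' h11 h11' p hp Q hQ σ hσsum hσstat
end

section
/- For the N=2 channel problem with 0 < p_{01}, p_{11} < 1, the steady-state average reward of the stay-on-0/switch-on-1 policy π_2 equals U_2(P) = p_{01}²/(1−p_{11}+p_{01})² + p_{01}(1−p_{11})/(1−p_{11}+p_{01}). -/
/-!
Under `π₂` the next sensed channel is always the one whose current state is the smaller, so the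
joint kernel depends on the current pair only as an unordered pair. The stationary equations at
`(0,0)` and `(1,1)` therefore involve `σ (0,1)` and `σ (1,0)` only through their sum: they are the
balance equations for the number of channels in state 1, two independent copies of the channel,
whose stationary law is binomial. Hence `σ (1,1) = ω²` with `ω = p01 / (1 - p11 + p01)`, and the
reward `(1 - σ (1,1)) p01 + σ (1,1) p11` is the closed form.
-/

def pi2Kernel (p : Fin 2 → Fin 2 → ℝ) (i j : Fin 2 × Fin 2) : ℝ :=
  if i.1 = 1 then p i.1 j.2 * p i.2 j.1 else p i.1 j.1 * p i.2 j.2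

lemma pi2Kernel_eq_min_max (p : Fin 2 → Fin 2 → ℝ) (i j : Fin 2 × Fin 2) :
    pi2Kernel p i j = p (min i.1 i.2) j.1 * p (max i.1 i.2) j.2 := by
  obtain ⟨s, o⟩ := i
  fin_cases s <;> fin_cases o <;> simp [pi2Kernel, mul_comm]

section Stationary

variable {p : Fin 2 → Fin 2 → ℝ} {σ : Fin 2 × Fin 2 → ℝ}

lemma pi2_stationary_diag (hσ : ∀ j, σ j = ∑ i, σ i * pi2Kernel p i j) (t : Fin 2) :
    σ (t, t) = σ (0, 0) * p 0 t ^ 2 + (σ (0, 1) + σ (1, 0)) * (p 0 t * p 1 t)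
      + σ (1, 1) * p 1 t ^ 2 := by
  rw [hσ]
  simp only [Fintype.sum_prod_type, Fin.sum_univ_two, pi2Kernel_eq_min_max, min_self, max_self,
    Fin.zero_le, inf_of_le_left, sup_of_le_right, inf_of_le_right, sup_of_le_left]
  ring

lemma pi2_sensed_one_mass (hp : ∀ s, p s 0 + p s 1 = 1)
    (hσ : ∀ j, σ j = ∑ i, σ i * pi2Kernel p i j) :
    σ (1, 0) + σ (1, 1) = (σ (0, 0) + σ (0, 1) + σ (1, 0)) * p 0 1 + σ (1, 1) * p 1 1 := by
  conv_lhs => rw [hσ (1, 0), hσ (1, 1)]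
  simp only [Fintype.sum_prod_type, Fin.sum_univ_two, pi2Kernel_eq_min_max, min_self, max_self,
    Fin.zero_le, inf_of_le_left, sup_of_le_right, inf_of_le_right, sup_of_le_left]
  linear_combination σ (0, 0) * p 0 1 * hp 0 + (σ (0, 1) + σ (1, 0)) * p 0 1 * hp 1
    + σ (1, 1) * p 1 1 * hp 1

end Stationary

/-- `x, c, w` is a stationary law of the number of channels in state 1 (zero, one, two). -/
lemma both_on_mass_eq {a b x c w : ℝ} (hD : 1 - b + a ≠ 0) (hE : 1 + b - a ≠ 0)
    (hsum : x + c + w = 1)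
    (h0 : x = x * (1 - a) ^ 2 + c * ((1 - a) * (1 - b)) + w * (1 - b) ^ 2)
    (h1 : w = x * a ^ 2 + c * (a * b) + w * b ^ 2) :
    w = (a / (1 - b + a)) ^ 2 := by
  -- each channel is marginally a stationary two-state chain, so the mean count is `2ω`
  have mean : (c + 2 * w) * (1 - b + a) = 2 * a := by
    linear_combination h1 - h0 + 2 * a * hsum
  have hw : w * (1 - b + a) ^ 2 * (1 + b - a) = a ^ 2 * (1 + b - a) := by
    linear_combination (1 - b + a) * (h1 + a ^ 2 * hsum) + a * (b - a) * mean
  rw [div_pow, eq_div_iff (pow_ne_zero 2 hD)]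
  exact mul_right_cancel₀ hE hw

theorem steady_state_reward_pi2_general (p01 p11 : ℝ)
    (h01 : 0 < p01) (h01' : p01 < 1) (h11 : 0 < p11) (h11' : p11 < 1)
    (p : Fin 2 → Fin 2 → ℝ)
    (hp : p = ![![1 - p01, p01], ![1 - p11, p11]])
    -- transition kernel of the joint chain under policy π₂ :
    -- stay on the sensed channel after a 0, switch after a 1
    (Q : (Fin 2 × Fin 2) → (Fin 2 × Fin 2) → ℝ)
    (hQ : ∀ i j : Fin 2 × Fin 2,
      Q i j = if i.1 = 1 then p i.1 j.2 * p i.2 j.1 else p i.1 j.1 * p i.2 j.2)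
    (σ : (Fin 2 × Fin 2) → ℝ)
    (hσsum : ∑ i, σ i = 1)
    (hσstat : ∀ j, σ j = ∑ i, σ i * Q i j) :
    σ (1, 0) + σ (1, 1) =
      p01 ^ 2 / (1 - p11 + p01) ^ 2 +
        p01 * (1 - p11) / (1 - p11 + p01) := by
  have hQp : Q = pi2Kernel p := funext₂ hQ
  subst hQp hp
  have hD : 1 - p11 + p01 ≠ 0 := by linarith
  have hsum : σ (0, 0) + (σ (0, 1) + σ (1, 0)) + σ (1, 1) = 1 := by
    simp only [Fintype.sum_prod_type, Fin.sum_univ_two] at hσsum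
    linarith
  have hboth := both_on_mass_eq hD (by linarith) hsum
    (by simpa using pi2_stationary_diag hσstat 0) (by simpa using pi2_stationary_diag hσstat 1)
  rw [pi2_sensed_one_mass (fun s => by fin_cases s <;> simp) hσstat]
  simp only [Matrix.cons_val_zero, Matrix.cons_val_one, Matrix.cons_val_fin_one]
  rw [show σ (0, 0) + σ (0, 1) + σ (1, 0) = 1 - σ (1, 1) by linarith, hboth]
  field_simp
  ring

/-- Steady-state average reward of the stay-on-0/switch-on-1 policy `π₂`
for two identical two-state Markov channels: the stationary probability,
under the induced 4-state joint chain on (sensed state, other state),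
of sensing a 1 equals the stated closed form. -/
theorem steady_state_reward_pi2 (p01 p11 : ℝ)
    (h01 : 0 < p01) (h01' : p01 < 1) (h11 : 0 < p11) (h11' : p11 < 1)
    (p : Fin 2 → Fin 2 → ℝ)
    (hp : p = ![![1 - p01, p01], ![1 - p11, p11]])
    -- transition kernel of the joint chain under policy π₂ :
    -- stay on the sensed channel after a 0, switch after a 1
    (Q : (Fin 2 × Fin 2) → (Fin 2 × Fin 2) → ℝ)
    (hQ : ∀ i j : Fin 2 × Fin 2,
      Q i j = if i.1 = 1 then p i.1 j.2 * p i.2 j.1 else p i.1 j.1 * p i.2 j.2)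
    (σ : (Fin 2 × Fin 2) → ℝ)
    (hσpos : ∀ i, 0 ≤ σ i) (hσsum : ∑ i, σ i = 1)
    (hσstat : ∀ j, σ j = ∑ i, σ i * Q i j) :
    σ (1, 0) + σ (1, 1) =
      p01 ^ 2 / (1 - p11 + p01) ^ 2 +
        p01 * (1 - p11) / (1 - p11 + p01) :=
  steady_state_reward_pi2_general p01 p11 h01 h01' h11 h11' p hp Q hQ σ hσsum hσstat
end

section
/- If U_1, U_2 are given by U_1(P) = p_{01}²/(1−p_{11}+p_{01})² + (1−p_{01}+p_{11})p_{01}(1−p_{11})/(1−p_{11}+p_{01})² and U_2(P) = p_{01}²/(1−p_{11}+p_{01})² + p_{01}(1−p_{11})/(1−p_{11}+p_{01}), with 0 < p_{01}, p_{11} < 1, then U_1(P) > U_2(P) if and only if p_{11} > p_{01}, and U_1(P) = U_2(P) if and only if p_{11} = p_{01}. -/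
lemma gt_iff_and_eq_iff_of_sub_eq_mul_sub {x y a b c : ℝ} (hc : 0 < c)
    (h : x - y = c * (b - a)) : (x > y ↔ b > a) ∧ (x = y ↔ b = a) := by
  constructor
  · rw [gt_iff_lt, ← sub_pos, h, mul_pos_iff_of_pos_left hc, sub_pos]
  · rw [← sub_eq_zero, h, mul_eq_zero, sub_eq_zero, or_iff_right hc.ne']

lemma myopic_reward_sub (p01 p11 : ℝ) (hd : 1 - p11 + p01 ≠ 0) :
    (p01 ^ 2 / (1 - p11 + p01) ^ 2 + (1 - p01 + p11) * p01 * (1 - p11) / (1 - p11 + p01) ^ 2) -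
      (p01 ^ 2 / (1 - p11 + p01) ^ 2 + p01 * (1 - p11) / (1 - p11 + p01)) =
      2 * p01 * (1 - p11) / (1 - p11 + p01) ^ 2 * (p11 - p01) := by
  field_simp
  ring

theorem reward_comparison_general (p01 p11 U1 U2 : ℝ)
    (h01 : 0 < p01) (h11' : p11 < 1)
    (hU1 : U1 = p01 ^ 2 / (1 - p11 + p01) ^ 2 +
      (1 - p01 + p11) * p01 * (1 - p11) / (1 - p11 + p01) ^ 2)
    (hU2 : U2 = p01 ^ 2 / (1 - p11 + p01) ^ 2 +
      p01 * (1 - p11) / (1 - p11 + p01)) :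
    (U1 > U2 ↔ p11 > p01) ∧ (U1 = U2 ↔ p11 = p01) := by
  have hd : 0 < 1 - p11 + p01 := by linarith
  have hc : 0 < 2 * p01 * (1 - p11) / (1 - p11 + p01) ^ 2 := by
    have : 0 < 1 - p11 := sub_pos.mpr h11'
    positivity
  subst hU1 hU2
  exact gt_iff_and_eq_iff_of_sub_eq_mul_sub hc (myopic_reward_sub p01 p11 hd.ne')

/-- Comparison of the steady-state rewards of the two myopic policies. -/
theorem reward_comparison (p01 p11 U1 U2 : ℝ)
    (h01 : 0 < p01) (h01' : p01 < 1) (h11 : 0 < p11) (h11' : p11 < 1)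
    (hU1 : U1 = p01 ^ 2 / (1 - p11 + p01) ^ 2 +
      (1 - p01 + p11) * p01 * (1 - p11) / (1 - p11 + p01) ^ 2)
    (hU2 : U2 = p01 ^ 2 / (1 - p11 + p01) ^ 2 +
      p01 * (1 - p11) / (1 - p11 + p01)) :
    (U1 > U2 ↔ p11 > p01) ∧ (U1 = U2 ↔ p11 = p01) :=
  reward_comparison_general p01 p11 U1 U2 h01 h11' hU1 hU2
end
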